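/- The second player can guarantee the minimax value: in any finite game, there exists a function τ : S → S with τ s ∈ A s for every nonterminal s, such that for every state s and every play s = s_0, s_1, …, s_k from s satisfying s_{i+1} = τ s_i whenever j s_i = false (for i < k), the terminal payoff satisfies f s_k ≤ M s_0. -/
import Mathlib


open Classical in
/-- The minimax value of a state in a finite game, defined by well-founded
recursion on the child relation. -/
noncomputable def minimax {S : Type*} (A : S → Finset S)
    (hwf : WellFounded (fun x y : S => x ∈ A y)) (j : S → Bool) (f : S → ℤ) : S → ℤ :=
  WellFounded.fix hwf (fun s ih =>
    if h : A s = ∅ then f s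
    else
      have hne : (A s).attach.Nonempty :=
        Finset.attach_nonempty_iff.mpr (Finset.nonempty_iff_ne_empty.mpr h)
      if j s = true then (A s).attach.sup' hne (fun x => ih x.1 x.2)
      else (A s).attach.inf' hne (fun x => ih x.1 x.2))

open Classical in
theorem minimax_eq {S : Type*} (A : S → Finset S)
    (hwf : WellFounded (fun x y : S => x ∈ A y)) (j : S → Bool) (f : S → ℤ) (s : S) :
    minimax A hwf j f s =
      if h : A s = ∅ then f s
      else
        have hne : (A s).attach.Nonempty :=
          Finset.attach_nonempty_iff.mpr (Finset.nonempty_iff_ne_empty.mpr h)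
        if j s = true then (A s).attach.sup' hne (fun x => minimax A hwf j f x.1)
        else (A s).attach.inf' hne (fun x => minimax A hwf j f x.1) := by
  rw [minimax, WellFounded.fix_eq]

/-- the second player can guarantee the minimax value. -/
theorem second_player_guarantees_minimax {S : Type*} [Fintype S]
    (A : S → Finset S) (hwf : WellFounded (fun x y : S => x ∈ A y))
    (j : S → Bool) (f : S → ℤ)
    (hf : ∀ s, A s = ∅ → -1 ≤ f s ∧ f s ≤ 1) :
    ∃ τ : S → S, (∀ s, A s ≠ ∅ → τ s ∈ A s) ∧
      ∀ (s : S) (k : ℕ) (p : ℕ → S), p 0 = s →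
        (∀ i < k, p (i + 1) ∈ A (p i)) → A (p k) = ∅ →
        (∀ i < k, j (p i) = false → p (i + 1) = τ (p i)) →
        f (p k) ≤ minimax A hwf j f (p 0) := by
  classical
  have hchoice : ∀ s : S, A s ≠ ∅ → ∃ t ∈ A s, ∀ u ∈ A s,
      minimax A hwf j f t ≤ minimax A hwf j f u := by
    intro s hs
    obtain ⟨t, ht, htmin⟩ := Finset.exists_min_image (A s) (minimax A hwf j f)
      (Finset.nonempty_iff_ne_empty.mpr hs)
    exact ⟨t, ht, htmin⟩
  choose! τ hτ1 hτ2 using hchoice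
  refine ⟨τ, hτ1, ?_⟩
  have key : ∀ (k : ℕ) (p : ℕ → S),
      (∀ i < k, p (i + 1) ∈ A (p i)) → A (p k) = ∅ →
      (∀ i < k, j (p i) = false → p (i + 1) = τ (p i)) →
      f (p k) ≤ minimax A hwf j f (p 0) := by
    intro k
    induction k with
    | zero =>
      intro p _ hterm _
      rw [minimax_eq, dif_pos hterm]
    | succ k ih =>
      intro p hstep hterm hfollow
      have h1 : f (p (k + 1)) ≤ minimax A hwf j f (p 1) := by
        have := ih (fun i => p (i + 1)) (fun i hi => hstep (i + 1) (by omega))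
          hterm (fun i hi hji => hfollow (i + 1) (by omega) hji)
        simpa using this
      have hne : A (p 0) ≠ ∅ := by
        intro h
        have := hstep 0 (by omega)
        simp [h] at this
      have hmem : p 1 ∈ A (p 0) := hstep 0 (by omega)
      have h2 : minimax A hwf j f (p 1) ≤ minimax A hwf j f (p 0) := by
        rw [minimax_eq A hwf j f (p 0), dif_neg hne]
        rcases Bool.eq_false_or_eq_true (j (p 0)) with hj | hj
        · simp only [hj, if_true]
          exact Finset.le_sup' (fun x : A (p 0) => minimax A hwf j f x.1)
            (Finset.mem_attach _ ⟨p 1, hmem⟩)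
        · simp only [hj, Bool.false_eq_true, if_false]
          have hp1 : p 1 = τ (p 0) := hfollow 0 (by omega) hj
          rw [hp1]
          exact Finset.le_inf' _ _ (fun x _ => hτ2 (p 0) hne x.1 x.2)
      exact h1.trans h2
  exact fun s k p _ => key k p
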